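/- arXiv:1801.02923 — 2 statements merged into one kernel-verified Lean document; each statement's English description precedes it below -/
import Mathlib

section
/- If D is a k-meridionally colorable Gauss diagram of a virtual link that is not cut-split, then the height function h attains a unique local maximum along each color class, namely at the seed strand of that color. -/
/-- An abstract Gauss diagram: a finite collection of circles, each circle `c`
carrying `heads c` arrowheads which divide it into `heads c` strands (in cyclic
order); each chord has its arrowhead at one of these positions (bijectively),
its arrowtail on some strand, and a sign. -/
structure GaussDiagram where
  circles : ℕ
  heads : Fin circles → ℕ
  chords : ℕ
  headPos : Fin chords → (c : Fin circles) × Fin (heads c)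
  headBij : Function.Bijective headPos
  tail : Fin chords → (c : Fin circles) × Fin (heads c)
  sign : Fin chords → Bool

namespace GaussDiagram

variable (D : GaussDiagram)

/-- A strand: the arc of circle `c` beginning just after arrowhead `i`. -/
abbrev Strand := (c : Fin D.circles) × Fin (D.heads c)

noncomputable def nStrands : ℕ := Nat.card D.Strand

/-- The next strand along the circle (across one arrowhead). -/
def next (s : D.Strand) : D.Strand :=
  ⟨s.1, ⟨(s.2.val + 1) % D.heads s.1, Nat.mod_lt _ (Nat.lt_of_le_of_lt (Nat.zero_le _) s.2.isLt)⟩⟩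

/-- The strand on one side of the arrowhead of chord `p`. -/
def src (p : Fin D.chords) : D.Strand := D.headPos p
/-- The strand on the other side of the arrowhead of chord `p`. -/
def dst (p : Fin D.chords) : D.Strand := D.next (D.src p)

/-- Two strands are adjacent if they are separated by an arrowhead. -/
def Adjacent (s t : D.Strand) : Prop :=
  ∃ p : Fin D.chords, (D.src p = s ∧ D.dst p = t) ∨ (D.src p = t ∧ D.dst p = s)

/-- An overbridge is a strand containing at least one arrowtail. -/
def IsOverbridge (s : D.Strand) : Prop := ∃ p : Fin D.chords, D.tail p = s

/-- The bridge number of the diagram: the number of overbridges. -/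
noncomputable def vb : ℕ := Nat.card {s : D.Strand // D.IsOverbridge s}

/-- Cut-split: some circle has no chords, or two strands adjacent at an
arrowhead coincide. -/
def CutSplit : Prop :=
  (∃ c : Fin D.circles, D.heads c = 0) ∨ ∃ p : Fin D.chords, D.src p = D.dst p

/-- A `k`-meridional coloring of `D`, recorded by its coloring sequence:
`seq` enumerates the strands in the order they are colored, the first `k` being
the seed strands (with the `k` distinct colors `0, …, k-1`), and each later
strand receives its color through a coloring move: there is a chord `p` whose
arrowhead separates it from a previously colored strand of the same color, and
whose arrowtail lies on a previously colored strand. -/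
structure MerColoring (k : ℕ) where
  seq : Fin D.nStrands → D.Strand
  bij : Function.Bijective seq
  col : Fin D.nStrands → Fin k
  seed_col : ∀ (i : Fin D.nStrands) (h : i.val < k), col i = ⟨i.val, h⟩
  move : ∀ i : Fin D.nStrands, k ≤ i.val →
    ∃ (p : Fin D.chords) (l r : Fin D.nStrands), l < i ∧ r < i ∧
      ((D.src p = seq l ∧ D.dst p = seq i) ∨ (D.src p = seq i ∧ D.dst p = seq l)) ∧
      D.tail p = seq r ∧ col i = col l

variable {D}

/-- The position of a strand in the coloring sequence. -/
noncomputable def MerColoring.idx {k : ℕ} (mc : D.MerColoring k) (s : D.Strand) :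
    Fin D.nStrands :=
  (Equiv.ofBijective mc.seq mc.bij).symm s

/-- The height function `h(α_j) = 1/(j+1)` (zero-indexed: `1/(j+2)`). -/
noncomputable def MerColoring.height {k : ℕ} (mc : D.MerColoring k) (s : D.Strand) : ℚ :=
  1 / ((mc.idx s : ℕ) + 2)

/-- The final color of a strand. -/
noncomputable def MerColoring.colorOf {k : ℕ} (mc : D.MerColoring k) (s : D.Strand) : Fin k :=
  mc.col (mc.idx s)

variable (D)

/-- The Wirtinger number: the least `k` for which `D` is `k`-meridionally
colorable. -/
noncomputable def wirt : ℕ := sInf {k | Nonempty (D.MerColoring k)}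

/-- A single coloring move on partial colorings: extend a color across the
arrowhead of a chord whose arrowtail lies on an already colored strand. -/
def ColoringMove {k : ℕ} (f g : D.Strand → Option (Fin k)) : Prop :=
  ∃ (p : Fin D.chords) (ap aq : D.Strand),
    ((D.src p = ap ∧ D.dst p = aq) ∨ (D.src p = aq ∧ D.dst p = ap)) ∧
    (f (D.tail p)).isSome ∧ (f ap).isSome ∧ f aq = none ∧
    g = Function.update f aq (f ap)

/-- A set of strands is connected if any two of its members are joined by a
path of adjacent strands inside the set. -/
def ConnectedStrands (A : Set D.Strand) : Prop :=
  ∀ s ∈ A, ∀ t ∈ A,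
    Relation.ReflTransGen (fun x y => x ∈ A ∧ y ∈ A ∧ D.Adjacent x y) s t

end GaussDiagram

namespace GaussDiagram

lemma MerColoring.seq_idx {D : GaussDiagram} {k : ℕ} (mc : D.MerColoring k)
    (s : D.Strand) : mc.seq (mc.idx s) = s :=
  (Equiv.ofBijective mc.seq mc.bij).apply_symm_apply s

lemma MerColoring.idx_seq {D : GaussDiagram} {k : ℕ} (mc : D.MerColoring k)
    (j : Fin D.nStrands) : mc.idx (mc.seq j) = j := by
  apply mc.bij.injective
  rw [mc.seq_idx]

lemma MerColoring.height_lt {D : GaussDiagram} {k : ℕ} (mc : D.MerColoring k)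
    {s t : D.Strand} (h : mc.idx s < mc.idx t) : mc.height t < mc.height s := by
  unfold MerColoring.height
  apply one_div_lt_one_div_of_lt
  · positivity
  · have : (mc.idx s : ℕ) < (mc.idx t : ℕ) := h
    exact_mod_cast Nat.add_lt_add_right this 2

end GaussDiagram

open GaussDiagram

/-- If `D` is a `k`-meridionally colored Gauss diagram of a virtual link that is
not cut-split, then along each color class the height function attains a unique
local maximum, namely at the seed strand of that color: a strand of color `μ`
is strictly higher than all adjacent strands of color `μ` if and only if it is
the seed strand of color `μ`. -/
theorem unique_local_max_at_seed (D : GaussDiagram) (hns : ¬ D.CutSplit)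
    (k : ℕ) (hk : k ≤ D.nStrands) (mc : D.MerColoring k)
    (μ : Fin k) (s : D.Strand) (hs : mc.colorOf s = μ) :
    (∀ t : D.Strand, mc.colorOf t = μ → t ≠ s → D.Adjacent s t →
        mc.height t < mc.height s)
      ↔ s = mc.seq ⟨μ.val, lt_of_lt_of_le μ.isLt hk⟩ := by
  constructor
  · intro hmax
    by_contra hne
    set i := mc.idx s with hi
    have hseqi : mc.seq i = s := mc.seq_idx s
    have hki : k ≤ i.val := by
      by_contra hlt
      push_neg at hlt
      have hcol : mc.col i = μ := hs
      rw [mc.seed_col i hlt] at hcol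
      apply hne
      rw [← hseqi]
      congr 1
      have hv := congrArg Fin.val hcol
      exact Fin.eq_of_val_eq hv
    obtain ⟨p, l, r, hl, hr, hadj, htail, hcoll⟩ := mc.move i hki
    have hts : mc.seq l ≠ s := by
      rw [← hseqi]
      intro h
      exact absurd (mc.bij.injective h) (Fin.ne_of_lt hl)
    have ht : mc.colorOf (mc.seq l) = μ := by
      unfold MerColoring.colorOf
      rw [mc.idx_seq, ← hcoll]
      exact hs
    have hadj' : D.Adjacent s (mc.seq l) := by
      refine ⟨p, ?_⟩
      rw [hseqi] at hadj
      exact hadj.symm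
    have h1 := hmax (mc.seq l) ht hts hadj'
    have h2 : mc.height s < mc.height (mc.seq l) := by
      apply mc.height_lt
      rw [mc.idx_seq, ← hi]
      exact hl
    exact absurd h1 (lt_asymm h2)
  · intro hseed t ht htne hadj
    apply mc.height_lt
    have hidxs : mc.idx s = ⟨μ.val, lt_of_lt_of_le μ.isLt hk⟩ := by
      rw [hseed, mc.idx_seq]
    rw [hidxs]
    set j := mc.idx t with hj
    rcases lt_or_ge j.val k with hjk | hjk
    · exfalso
      have hcol : mc.col j = μ := ht
      rw [mc.seed_col j hjk] at hcol
      apply htne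
      rw [← mc.seq_idx t, ← hj, hseed]
      congr 1
      have hv := congrArg Fin.val hcol
      exact Fin.eq_of_val_eq hv
    · exact Fin.lt_def.mpr (lt_of_lt_of_le μ.isLt hjk)
end

section
/- In a k-meridional coloring of a Gauss diagram D that is not cut-split, for each color class, the set of strands of that color, ordered by adjacency, is colored in an order such that starting from the seed strand the coloring proceeds outward: each newly colored strand of the class is adjacent to the previously colored connected block. -/
/-!
Each non-seed strand is colored by a move across an arrowhead from an earlier strand of the
same color, so adding it to its color class keeps the class connected; before the first move
every class holds at most its seed.
-/

namespace GaussDiagram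

variable {D : GaussDiagram}

theorem Adjacent.symm {s t : D.Strand} (h : D.Adjacent s t) : D.Adjacent t s :=
  let ⟨p, hp⟩ := h
  ⟨p, hp.symm⟩

theorem connectedStrands_of_subsingleton {A : Set D.Strand} (hA : A.Subsingleton) :
    D.ConnectedStrands A := fun _ hs _ ht => hA hs ht ▸ Relation.ReflTransGen.refl

theorem ConnectedStrands.of_subset_of_adjacent {A B : Set D.Strand} (hA : D.ConnectedStrands A)
    (hAB : A ⊆ B) (hB : ∀ b ∈ B, b ∈ A ∨ ∃ a ∈ A, D.Adjacent a b) : D.ConnectedStrands B := by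
  set adjIn : D.Strand → D.Strand → Prop := fun x y => x ∈ B ∧ y ∈ B ∧ D.Adjacent x y
  have : Std.Symm adjIn := ⟨fun _ _ ⟨hx, hy, hxy⟩ => ⟨hy, hx, hxy.symm⟩⟩
  have reach_A : ∀ b ∈ B, ∃ a ∈ A, Relation.ReflTransGen adjIn a b := by
    intro b hb
    rcases hB b hb with hbA | ⟨a, haA, hab⟩
    · exact ⟨b, hbA, .refl⟩
    · exact ⟨a, haA, .single ⟨hAB haA, hb, hab⟩⟩
  intro s hs t ht
  obtain ⟨a, haA, has⟩ := reach_A s hs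
  obtain ⟨a', ha'A, ha't⟩ := reach_A t ht
  have hAa : Relation.ReflTransGen adjIn a a' :=
    Relation.ReflTransGen.mono (fun _ _ ⟨hx, hy, hxy⟩ => ⟨hAB hx, hAB hy, hxy⟩) _ _
      (hA a haA a' ha'A)
  exact ((Relation.ReflTransGen.stdSymm).symm _ _ has).trans (hAa.trans ha't)

namespace MerColoring

variable {k : ℕ} (mc : D.MerColoring k)

def coloredClass (t : ℕ) (μ : Fin k) : Set D.Strand :=
  {s | ∃ i : Fin D.nStrands, i.val < t ∧ mc.seq i = s ∧ mc.col i = μ}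

theorem exists_adjacent_of_move {i : Fin D.nStrands} (hi : k ≤ i.val) :
    ∃ l < i, mc.col l = mc.col i ∧ D.Adjacent (mc.seq l) (mc.seq i) :=
  let ⟨p, l, _, hl, _, hp, _, hcol⟩ := mc.move i hi
  ⟨l, hl, hcol.symm, p, hp⟩

theorem coloredClass_mono {t t' : ℕ} (h : t ≤ t') (μ : Fin k) :
    mc.coloredClass t μ ⊆ mc.coloredClass t' μ :=
  fun _ ⟨i, hi, hs, hcol⟩ => ⟨i, hi.trans_le h, hs, hcol⟩

theorem seed_mem_coloredClass (hk : k ≤ D.nStrands) (μ : Fin k) {t : ℕ} (ht : k ≤ t) :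
    mc.seq ⟨μ.val, μ.isLt.trans_le hk⟩ ∈ mc.coloredClass t μ :=
  ⟨_, μ.isLt.trans_le ht, rfl, mc.seed_col _ μ.isLt⟩

/-- The first `k` strands are the seeds, whose colors are pairwise distinct. -/
theorem coloredClass_subsingleton {t : ℕ} (ht : t ≤ k) (μ : Fin k) :
    (mc.coloredClass t μ).Subsingleton := by
  rintro _ ⟨i, hi, rfl, hicol⟩ _ ⟨j, hj, rfl, hjcol⟩
  have hcol := hicol.trans hjcol.symm
  rw [mc.seed_col i (hi.trans_le ht), mc.seed_col j (hj.trans_le ht)] at hcol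
  exact congrArg mc.seq (Fin.ext (Fin.mk.inj_iff.mp hcol))

theorem connectedStrands_coloredClass_succ {t : ℕ} (ht : k ≤ t) (μ : Fin k)
    (hconn : D.ConnectedStrands (mc.coloredClass t μ)) :
    D.ConnectedStrands (mc.coloredClass (t + 1) μ) := by
  refine hconn.of_subset_of_adjacent (mc.coloredClass_mono t.le_succ μ) ?_
  rintro _ ⟨i, hi, rfl, hcol⟩
  rcases (Nat.lt_succ_iff.mp hi).lt_or_eq with hit | rfl
  · exact .inl ⟨i, hit, rfl, hcol⟩
  · obtain ⟨l, hl, hlcol, hadj⟩ := mc.exists_adjacent_of_move ht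
    exact .inr ⟨mc.seq l, ⟨l, hl, rfl, hlcol.trans hcol⟩, hadj⟩

theorem connectedStrands_coloredClass (t : ℕ) (μ : Fin k) :
    D.ConnectedStrands (mc.coloredClass t μ) := by
  rcases le_total t k with htk | hkt
  · exact connectedStrands_of_subsingleton (mc.coloredClass_subsingleton htk μ)
  induction t, hkt using Nat.le_induction with
  | base => exact connectedStrands_of_subsingleton (mc.coloredClass_subsingleton le_rfl μ)
  | succ t hkt ih => exact mc.connectedStrands_coloredClass_succ hkt μ ih

end MerColoring

end GaussDiagram

open GaussDiagram in
theorem color_class_interval_from_seed_general (D : GaussDiagram)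
    (k : ℕ) (hk : k ≤ D.nStrands) (mc : D.MerColoring k) :
    (∀ (t : ℕ) (μ : Fin k),
      D.ConnectedStrands
        {s : D.Strand | ∃ i : Fin D.nStrands, i.val < t ∧ mc.seq i = s ∧ mc.col i = μ}) ∧
    (∀ (μ : Fin k) (t : ℕ), k ≤ t →
      mc.seq ⟨μ.val, lt_of_lt_of_le μ.isLt hk⟩ ∈
        {s : D.Strand | ∃ i : Fin D.nStrands, i.val < t ∧ mc.seq i = s ∧ mc.col i = μ}) ∧
    (∀ i : Fin D.nStrands, k ≤ i.val →
      ∃ l : Fin D.nStrands, l < i ∧ mc.col l = mc.col i ∧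
        D.Adjacent (mc.seq l) (mc.seq i)) :=
  ⟨mc.connectedStrands_coloredClass, fun μ _ ht => mc.seed_mem_coloredClass hk μ ht,
    fun _ hi => mc.exists_adjacent_of_move hi⟩

open GaussDiagram in
/-- In a `k`-meridional coloring of a Gauss diagram that is not cut-split, the
coloring of each color class proceeds outward from the seed: at every stage the
colored portion of each color class is a connected block of consecutive strands
containing the seed strand of that color, and each newly colored strand is
adjacent to a previously colored strand of the same color. -/
theorem color_class_interval_from_seed (D : GaussDiagram) (hns : ¬ D.CutSplit)
    (k : ℕ) (hk : k ≤ D.nStrands) (mc : D.MerColoring k) :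
    (∀ (t : ℕ) (μ : Fin k),
      D.ConnectedStrands
        {s : D.Strand | ∃ i : Fin D.nStrands, i.val < t ∧ mc.seq i = s ∧ mc.col i = μ}) ∧
    (∀ (μ : Fin k) (t : ℕ), k ≤ t →
      mc.seq ⟨μ.val, lt_of_lt_of_le μ.isLt hk⟩ ∈
        {s : D.Strand | ∃ i : Fin D.nStrands, i.val < t ∧ mc.seq i = s ∧ mc.col i = μ}) ∧
    (∀ i : Fin D.nStrands, k ≤ i.val →
      ∃ l : Fin D.nStrands, l < i ∧ mc.col l = mc.col i ∧
        D.Adjacent (mc.seq l) (mc.seq i)) :=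
  color_class_interval_from_seed_general D k hk mc
end
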